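/- The graph G^min_< constructed from a bi-directed graph G (by dropping arrowheads at simplicial vertices and then orienting each bi-directed edge v↔w with Bd(v) ⊆ Bd(w) and v < w as v→w, for a total order < extending strict boundary containment) is an ancestral graph. -/
import Mathlib


/-- Possible edge types between an ordered pair of distinct vertices of a
simple mixed graph.  `arrowTo` at `(v, w)` means `v → w`, `arrowFrom` means
`v ← w`, `undir` means `v − w` and `bidir` means `v ↔ w`. -/
inductive EType : Type
  | none | undir | arrowTo | arrowFrom | bidir
deriving DecidableEq

/-- The edge type seen from the reversed ordered pair of vertices. -/
def EType.mirror : EType → EType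
  | .none => .none
  | .undir => .undir
  | .arrowTo => .arrowFrom
  | .arrowFrom => .arrowTo
  | .bidir => .bidir

/-- A simple mixed graph: at most one edge (undirected, directed or
bi-directed) between any two distinct vertices, and no self loops. -/
structure MixedGraph (V : Type) where
  E : V → V → EType
  no_loop : ∀ v, E v v = .none
  symm : ∀ v w, E w v = (E v w).mirror

/-- `(a, b, c)` are three consecutive vertices on the path `p`. -/
def ConsecTriple {V : Type} (p : List V) (a b c : V) : Prop :=
  ∃ l1 l2, p = l1 ++ a :: b :: c :: l2

namespace MixedGraph

variable {V : Type} (G : MixedGraph V)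

/-- `v − w` is an edge of `G`. -/
def Undir (v w : V) : Prop := G.E v w = .undir

/-- `v → w` is an edge of `G`. -/
def Dir (v w : V) : Prop := G.E v w = .arrowTo

/-- `v ↔ w` is an edge of `G`. -/
def Bidir (v w : V) : Prop := G.E v w = .bidir

/-- `v` and `w` are adjacent (joined by some edge). -/
def Adj (v w : V) : Prop := G.E v w ≠ .none

/-- The edge between `a` and `b` has an arrowhead at `b`. -/
def HeadAt (a b : V) : Prop := G.E a b = .arrowTo ∨ G.E a b = .bidir

/-- Closed boundary: `v` together with its adjacent vertices. -/
def Bd (v : V) : Set V := insert v {w | G.Adj v w}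

/-- A set of vertices is complete if all of its pairs of distinct
vertices are adjacent. -/
def Complete (S : Set V) : Prop := ∀ v ∈ S, ∀ w ∈ S, v ≠ w → G.Adj v w

/-- A vertex is simplicial if its closed boundary is complete. -/
def Simplicial (v : V) : Prop := G.Complete (G.Bd v)

/-- `v` is an ancestor of `w`: `v = w` or there is a directed path from
`v` to `w`. -/
def Anc (v w : V) : Prop := Relation.ReflTransGen G.Dir v w

/-- The set of ancestors of vertices in `C`. -/
def anSet (C : Set V) : Set V := {v | ∃ c ∈ C, G.Anc v c}

/-- `G` is an ancestral graph. -/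
def Ancestral : Prop :=
  (∀ v w, G.Dir v w → ¬ G.Anc w v) ∧
  (∀ v w, G.Undir v w → ∀ u, ¬ G.HeadAt u v) ∧
  (∀ v w, G.Bidir v w → ¬ G.Anc v w)

/-- The boundary containment property. -/
def BdContain : Prop :=
  (∀ v w, G.Undir v w → G.Bd v = G.Bd w) ∧
  (∀ v w, G.Dir v w → G.Bd v ⊆ G.Bd w)

/-- `b` is a collider between consecutive neighbours `a` and `c`. -/
def Collider (a b c : V) : Prop := G.HeadAt a b ∧ G.HeadAt c b

/-- A path: a list of distinct vertices, consecutive ones adjacent. -/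
def IsPath (p : List V) : Prop := p.Nodup ∧ p.Chain' G.Adj

/-- `p` is an m-connecting path given `C`: every non-collider on it is
outside `C` and every collider on it is an ancestor of `C`. -/
def IsMConnPath (C : Set V) (p : List V) : Prop :=
  G.IsPath p ∧
  ∀ a b c, ConsecTriple p a b c →
    (G.Collider a b c → b ∈ G.anSet C) ∧ (¬ G.Collider a b c → b ∉ C)

/-- `v` and `w` are m-connected given `C`. -/
def MConn (v w : V) (C : Set V) : Prop :=
  ∃ p, G.IsMConnPath C p ∧ p.head? = some v ∧ p.getLast? = some w

/-- `v` and `w` are m-separated given `C`. -/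
def MSep (v w : V) (C : Set V) : Prop := ¬ G.MConn v w C

/-- A maximal (ancestral) graph: every pair of distinct non-adjacent
vertices is m-separated given some set. -/
def Maximal : Prop :=
  ∀ v w, v ≠ w → ¬ G.Adj v w → ∃ C : Set V, v ∉ C ∧ w ∉ C ∧ G.MSep v w C

/-- `G` is a bi-directed graph. -/
def Bidirected : Prop := ∀ v w, G.E v w = .none ∨ G.E v w = .bidir

/-- `G` is an undirected graph. -/
def UndirectedG : Prop := ∀ v w, G.E v w = .none ∨ G.E v w = .undir

/-- `G` is a directed acyclic graph. -/
def IsDAG : Prop :=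
  (∀ v w, G.E v w = .none ∨ G.E v w = .arrowTo ∨ G.E v w = .arrowFrom) ∧
  (∀ v w, G.Dir v w → ¬ G.Anc w v)

/-- `G` and `H` have the same skeleton. -/
def SameSkeleton (H : MixedGraph V) : Prop := ∀ v w, G.Adj v w ↔ H.Adj v w

/-- `G` and `H` are Markov equivalent: their m-separation relations
coincide. -/
def MarkovEquiv (H : MixedGraph V) : Prop :=
  ∀ v w (C : Set V), v ≠ w → v ∉ C → w ∉ C → (G.MSep v w C ↔ H.MSep v w C)

open Classical in
/-- The edge map obtained from `G` by dropping all arrowheads at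
simplicial vertices. -/
noncomputable def dropE (v w : V) : EType :=
  match G.E v w with
  | .none => .none
  | .undir => .undir
  | .arrowTo => if G.Simplicial w then .undir else .arrowTo
  | .arrowFrom => if G.Simplicial v then .undir else .arrowFrom
  | .bidir =>
      if G.Simplicial v then (if G.Simplicial w then .undir else .arrowTo)
      else (if G.Simplicial w then .arrowFrom else .bidir)

/-- The graph obtained from `G` by dropping all arrowheads at simplicial
vertices; for a bi-directed graph `G` this is the simplicial graph `Gˢ`. -/
noncomputable def drop : MixedGraph V where
  E := G.dropE
  no_loop v := by simp [dropE, G.no_loop]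
  symm v w := by
    unfold dropE
    rw [G.symm v w]
    cases h : G.E v w <;>
      simp only [EType.mirror] <;> split_ifs <;> simp_all [EType.mirror]

open Classical in
/-- The edge map of the minimally oriented graph `G^min_<`: starting from
the simplicial graph, each bi-directed edge `v ↔ w` with `Bd v ⊆ Bd w`
and `v < w` is replaced by `v → w`. -/
noncomputable def gminE [LinearOrder V] (v w : V) : EType :=
  match G.dropE v w with
  | .bidir =>
      if G.Bd v ⊆ G.Bd w ∧ v < w then .arrowTo
      else if G.Bd w ⊆ G.Bd v ∧ w < v then .arrowFrom
      else .bidir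
  | e => e

/-- The graph `G^min_<` produced by Algorithm 4.2 from `G` and the total
order on `V`. -/
noncomputable def gmin [LinearOrder V] : MixedGraph V where
  E := G.gminE
  no_loop v := by
    have h := G.drop.no_loop v
    simp only [drop] at h
    simp [gminE, h]
  symm v w := by
    have h := G.drop.symm v w
    simp only [drop] at h
    unfold gminE
    rw [h]
    cases hE : G.dropE v w <;> simp only [EType.mirror]
    case bidir =>
      by_cases c1 : G.Bd v ⊆ G.Bd w ∧ v < w
      · have c2 : ¬ (G.Bd w ⊆ G.Bd v ∧ w < v) := fun h' => lt_asymm c1.2 h'.2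
        simp [c1, c2, EType.mirror]
      · by_cases c2 : G.Bd w ⊆ G.Bd v ∧ w < v
        · simp [c1, c2, EType.mirror]
        · simp [c1, c2, EType.mirror]

/-- Total number of arrowheads of `G`: the number of directed edges plus
twice the number of bi-directed edges. -/
noncomputable def arr : ℕ :=
  {p : V × V | G.Dir p.1 p.2}.ncard + {p : V × V | G.Bidir p.1 p.2}.ncard

end MixedGraph

/-- `Gm` is a minimally oriented graph for `G`. -/
def MinOriented {V : Type} (G Gm : MixedGraph V) : Prop :=
  Gm.Ancestral ∧ Gm.Maximal ∧ G.MarkovEquiv Gm ∧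
  ∀ H : MixedGraph V, H.Ancestral → H.Maximal → G.MarkovEquiv H → Gm.arr ≤ H.arr

namespace MixedGraph

lemma bd_subset_of_simplicial {V : Type} (G : MixedGraph V) {v w : V}
    (hv : G.Simplicial v) (hadj : G.Adj v w) : G.Bd v ⊆ G.Bd w := by
  intro u hu
  rcases eq_or_ne u w with rfl | huw
  · exact Set.mem_insert _ _
  · have hwmem : w ∈ G.Bd v := Set.mem_insert_iff.mpr (Or.inr hadj)
    have hadj' : G.Adj w u := hv w hwmem u hu (Ne.symm huw)
    exact Set.mem_insert_iff.mpr (Or.inr hadj')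

lemma simplicial_of_bd_eq {V : Type} (G : MixedGraph V) {v w : V}
    (heq : G.Bd v = G.Bd w) (hv : G.Simplicial v) : G.Simplicial w := by
  unfold Simplicial at *
  rw [← heq]; exact hv

lemma bd_ssubset_of_simplicial {V : Type} (G : MixedGraph V) {v w : V}
    (hv : G.Simplicial v) (hw : ¬ G.Simplicial w) (hadj : G.Adj v w) :
    G.Bd v ⊂ G.Bd w := by
  refine ⟨G.bd_subset_of_simplicial hv hadj, fun hsub => hw ?_⟩
  have heq : G.Bd v = G.Bd w :=
    le_antisymm (G.bd_subset_of_simplicial hv hadj) hsub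
  exact G.simplicial_of_bd_eq heq hv

lemma gmin_dir_key {V : Type} [LinearOrder V] {G : MixedGraph V}
    (hG : G.Bidirected) (hord : ∀ v w : V, G.Bd v ⊂ G.Bd w → v < w)
    {v w : V} (h : (G.gmin).Dir v w) : G.Bd v ⊆ G.Bd w ∧ v < w := by
  have h' : G.gminE v w = .arrowTo := h
  rcases hG v w with h0 | h0
  · simp [MixedGraph.gminE, MixedGraph.dropE, h0] at h'
  · have hadj : G.Adj v w := by simp [MixedGraph.Adj, h0]
    by_cases hv : G.Simplicial v <;> by_cases hw : G.Simplicial w <;>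
      simp only [MixedGraph.gminE, MixedGraph.dropE, h0, hv, hw, if_true,
        if_false, ite_true, ite_false] at h'
    · exact absurd h' (by simp)
    · have hss := G.bd_ssubset_of_simplicial hv hw hadj
      exact ⟨hss.1, hord v w hss⟩
    · exact absurd h' (by simp)
    · split_ifs at h' with h1 h2 <;>
        first | exact h1 | exact absurd h' (by simp)

lemma gmin_anc_key {V : Type} [LinearOrder V] {G : MixedGraph V}
    (hG : G.Bidirected) (hord : ∀ v w : V, G.Bd v ⊂ G.Bd w → v < w)
    {v w : V} (h : (G.gmin).Anc v w) : G.Bd v ⊆ G.Bd w ∧ v ≤ w := by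
  induction h with
  | refl => exact ⟨subset_rfl, le_rfl⟩
  | tail _ hdir ih =>
    obtain ⟨hs, hlt⟩ := gmin_dir_key hG hord hdir
    exact ⟨ih.1.trans hs, le_of_lt (lt_of_le_of_lt ih.2 hlt)⟩

lemma gmin_undir_simplicial {V : Type} [LinearOrder V] {G : MixedGraph V}
    (hG : G.Bidirected) {v w : V} (h : (G.gmin).Undir v w) :
    G.Simplicial v := by
  have h' : G.gminE v w = .undir := h
  rcases hG v w with h0 | h0
  · simp [MixedGraph.gminE, MixedGraph.dropE, h0] at h'
  · by_cases hv : G.Simplicial v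
    · exact hv
    · by_cases hw : G.Simplicial w <;>
        simp only [MixedGraph.gminE, MixedGraph.dropE, h0, hv, hw, if_true,
          if_false, ite_true, ite_false] at h'
      · exact absurd h' (by simp)
      · split_ifs at h' <;> exact absurd h' (by simp)

lemma gmin_no_head_at_simplicial {V : Type} [LinearOrder V] {G : MixedGraph V}
    (hG : G.Bidirected) {u v : V} (hv : G.Simplicial v)
    (h : (G.gmin).HeadAt u v) : False := by
  have h' : G.gminE u v = .arrowTo ∨ G.gminE u v = .bidir := h
  rcases hG u v with h0 | h0
  · simp [MixedGraph.gminE, MixedGraph.dropE, h0] at h'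
  · by_cases hu : G.Simplicial u <;>
      simp only [MixedGraph.gminE, MixedGraph.dropE, h0, hu, hv, if_true,
        if_false, ite_true, ite_false] at h' <;>
      rcases h' with h' | h' <;> exact absurd h' (by simp)

lemma gmin_bidir_key {V : Type} [LinearOrder V] {G : MixedGraph V}
    (hG : G.Bidirected) {v w : V} (h : (G.gmin).Bidir v w) :
    ¬ (G.Bd v ⊆ G.Bd w ∧ v < w) ∧ v ≠ w := by
  have h' : G.gminE v w = .bidir := h
  have hne : v ≠ w := by
    rintro rfl
    simp [MixedGraph.gminE, MixedGraph.dropE, G.no_loop] at h'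
  rcases hG v w with h0 | h0
  · simp [MixedGraph.gminE, MixedGraph.dropE, h0] at h'
  · by_cases hv : G.Simplicial v <;> by_cases hw : G.Simplicial w <;>
      simp only [MixedGraph.gminE, MixedGraph.dropE, h0, hv, hw, if_true,
        if_false, ite_true, ite_false] at h'
    · exact absurd h' (by simp)
    · exact absurd h' (by simp)
    · exact absurd h' (by simp)
    · split_ifs at h' with h1 h2 <;>
        first | exact ⟨h1, hne⟩ | exact absurd h' (by simp)

end MixedGraph

/-- The graph `G^min_<` constructed by Algorithm 4.2 from a
bi-directed graph `G` and a total order extending strict boundary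
containment is an ancestral graph. -/
theorem stmt12 {V : Type} [LinearOrder V] (G : MixedGraph V) (hG : G.Bidirected)
    (hord : ∀ v w : V, G.Bd v ⊂ G.Bd w → v < w) :
    (G.gmin).Ancestral := by
  refine ⟨?_, ?_, ?_⟩
  · intro v w hdir hanc
    have h1 := MixedGraph.gmin_dir_key hG hord hdir
    have h2 := MixedGraph.gmin_anc_key hG hord hanc
    exact absurd h1.2 (not_lt.mpr h2.2)
  · intro v w hund u hhead
    exact MixedGraph.gmin_no_head_at_simplicial hG
      (MixedGraph.gmin_undir_simplicial hG hund) hhead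
  · intro v w hbi hanc
    obtain ⟨hnc, hne⟩ := MixedGraph.gmin_bidir_key hG hbi
    obtain ⟨hs, hle⟩ := MixedGraph.gmin_anc_key hG hord hanc
    exact hnc ⟨hs, lt_of_le_of_ne hle hne⟩
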